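/- arXiv:1412.1004 — 7 statements merged into one kernel-verified Lean document; each statement's English description precedes it below -/
import Mathlib

section
/- If G is a minimally rigid graph with fewer than 6 vertices of type 1, then G is connected. -/
open SimpleGraph

variable {V : Type*}

/-- Number of type-1 vertices in a vertex set. -/
noncomputable def n1 (t1 : V → Prop) (S : Set V) : ℕ := {v ∈ S | t1 v}.ncard

/-- Number of type-2 vertices in a vertex set. -/
noncomputable def n2 (t1 : V → Prop) (S : Set V) : ℕ := {v ∈ S | ¬ t1 v}.ncard

/-- Number of edges of `G` with both endpoints in `S`. -/
noncomputable def edgesIn (G : SimpleGraph V) (S : Set V) : ℕ :=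
  {e ∈ G.edgeSet | ∀ v ∈ e, v ∈ S}.ncard

/-- Sparsity: every subgraph on `n' ≥ 2` vertices has at most
`n₁' + 2 n₂' + min 0 (n₁' - 3)` edges. -/
def Sparse (G : SimpleGraph V) (t1 : V → Prop) : Prop :=
  ∀ S : Set V, 2 ≤ S.ncard →
    (edgesIn G S : ℤ) ≤ (n1 t1 S : ℤ) + 2 * n2 t1 S + min 0 ((n1 t1 S : ℤ) - 3)

/-- Minimal rigidity: either one vertex, or sparse with exactly
`n₁ + 2 n₂ + min 0 (n₁ - 3)` edges. -/
def MinRigid (G : SimpleGraph V) (t1 : V → Prop) : Prop :=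
  Nat.card V = 1 ∨
    (Sparse G t1 ∧
      (G.edgeSet.ncard : ℤ) = (n1 t1 Set.univ : ℤ) + 2 * n2 t1 Set.univ +
        min 0 ((n1 t1 Set.univ : ℤ) - 3))

/-- Rigidity: contains a spanning minimally rigid subgraph. -/
def Rigid (G : SimpleGraph V) (t1 : V → Prop) : Prop :=
  ∃ H : SimpleGraph V, H ≤ G ∧ MinRigid H t1

/-- A rigid block: a vertex-induced rigid subgraph, identified with its vertex set. -/
def RigidBlock (G : SimpleGraph V) (t1 : V → Prop) (S : Set V) : Prop :=
  Rigid (G.induce S) (fun v => t1 ↑v)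

lemma my_sep_split [Fintype V] (p : V → Prop) (A : Set V) :
    {v ∈ (Set.univ : Set V) | p v}.ncard
      = {v ∈ A | p v}.ncard + {v ∈ Aᶜ | p v}.ncard := by
  rw [← Set.ncard_union_eq ?_ (Set.toFinite _) (Set.toFinite _)]
  · congr 1; ext v; by_cases hv : v ∈ A <;> simp [hv]
  · rw [Set.disjoint_left]; rintro x ⟨hx, -⟩ ⟨hx', -⟩; exact hx' hx

lemma my_n1_n2 [Fintype V] (t1 : V → Prop) (S : Set V) :
    n1 t1 S + n2 t1 S = S.ncard := by
  rw [n1, n2, ← Set.ncard_union_eq ?_ (Set.toFinite _) (Set.toFinite _)]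
  · congr 1; ext v; by_cases hv : t1 v <;> simp [hv]
  · rw [Set.disjoint_left]; rintro x ⟨-, hx⟩ ⟨-, hx'⟩; exact hx' hx

lemma my_edges_singleton (G : SimpleGraph V) (w : V) : edgesIn G {w} = 0 := by
  have hset : {e ∈ G.edgeSet | ∀ v ∈ e, v ∈ ({w} : Set V)} = ∅ := by
    ext e
    induction e using Sym2.ind with
    | _ x y =>
      simp only [Set.mem_setOf_eq, Set.mem_empty_iff_false, iff_false, not_and]
      intro he hv
      have hx : x = w := hv x (Sym2.mem_mk_left x y)
      have hy : y = w := hv y (Sym2.mem_mk_right x y)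
      rw [mem_edgeSet, hx, hy] at he
      exact G.irrefl he
  rw [edgesIn, hset, Set.ncard_empty]

lemma my_edges_split [Fintype V] (G : SimpleGraph V) (A : Set V)
    (hA : ∀ {x y : V}, G.Adj x y → x ∈ A → y ∈ A) :
    edgesIn G Set.univ = edgesIn G A + edgesIn G Aᶜ := by
  have hUnion : G.edgeSet = {e ∈ G.edgeSet | ∀ v ∈ e, v ∈ A}
      ∪ {e ∈ G.edgeSet | ∀ v ∈ e, v ∈ Aᶜ} := by
    ext e
    induction e using Sym2.ind with
    | _ x y =>
      simp only [Set.mem_union, Set.mem_setOf_eq]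
      constructor
      · intro he
        by_cases hx : x ∈ A
        · left
          refine ⟨he, fun v hv => ?_⟩
          rcases Sym2.mem_iff.mp hv with rfl | rfl
          · exact hx
          · exact hA (G.mem_edgeSet.mp he) hx
        · right
          have hy : y ∉ A := fun hy => hx (hA ((G.mem_edgeSet.mp he).symm) hy)
          refine ⟨he, fun v hv => ?_⟩
          rcases Sym2.mem_iff.mp hv with rfl | rfl
          · exact hx
          · exact hy
      · rintro (⟨he, -⟩ | ⟨he, -⟩) <;> exact he
  have hdisj : Disjoint {e ∈ G.edgeSet | ∀ v ∈ e, v ∈ A}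
      {e ∈ G.edgeSet | ∀ v ∈ e, v ∈ Aᶜ} := by
    rw [Set.disjoint_left]
    rintro e ⟨-, h1⟩ ⟨-, h2⟩
    induction e using Sym2.ind with
    | _ x y => exact h2 x (Sym2.mem_mk_left x y) (h1 x (Sym2.mem_mk_left x y))
  have h0 : {e ∈ G.edgeSet | ∀ v ∈ e, v ∈ (Set.univ : Set V)} = G.edgeSet := by
    ext e; simp
  calc edgesIn G Set.univ = G.edgeSet.ncard := by rw [edgesIn, h0]
    _ = _ := by
        rw [hUnion, Set.ncard_union_eq hdisj (Set.toFinite _) (Set.toFinite _)]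
        rfl

/-- A minimally rigid graph with fewer than 6 type-1 vertices is connected. -/
theorem stmt1 {V : Type*} [Fintype V] (G : SimpleGraph V) (t1 : V → Prop)
    (h : MinRigid G t1) (h6 : n1 t1 Set.univ < 6) : G.Connected := by
  rcases h with h1 | ⟨hsp, heq⟩
  · obtain ⟨hsub, hne⟩ := Nat.card_eq_one_iff_unique.mp h1
    exact ⟨fun u v => by rw [Subsingleton.elim u v]⟩
  rcases isEmpty_or_nonempty V with hE | hNE
  · exfalso
    have huniv : (Set.univ : Set V) = ∅ := Set.univ_eq_empty_iff.mpr hE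
    have hes : G.edgeSet = ∅ := by
      ext e
      induction e using Sym2.ind with
      | _ x y => exact (IsEmpty.false x).elim
    rw [hes, huniv] at heq
    simp [n1, n2] at heq
  by_contra hc
  have hpc : ¬ G.Preconnected := fun hp => hc ⟨hp⟩
  rw [SimpleGraph.Preconnected] at hpc
  push_neg at hpc
  obtain ⟨u, v, hnuv⟩ := hpc
  set A : Set V := {w | G.Reachable u w} with hAdef
  have huA : u ∈ A := SimpleGraph.Reachable.refl u
  have hvB : v ∈ Aᶜ := hnuv
  have hclosed : ∀ {x y : V}, G.Adj x y → x ∈ A → y ∈ A :=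
    fun hxy hx => hx.trans hxy.reachable
  have hcase : ∀ S : Set V, S.Nonempty →
      (edgesIn G S = 0 ∧ n1 t1 S + n2 t1 S = 1) ∨
      ((edgesIn G S : ℤ) ≤ (n1 t1 S : ℤ) + 2 * n2 t1 S + min 0 ((n1 t1 S : ℤ) - 3)) := by
    intro S hS
    rcases Nat.lt_or_ge S.ncard 2 with h2 | h2
    · left
      have hpos : 0 < S.ncard := (Set.ncard_pos (Set.toFinite S)).mpr hS
      have h1 : S.ncard = 1 := by omega
      obtain ⟨w, hw⟩ := Set.ncard_eq_one.mp h1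
      subst hw
      exact ⟨my_edges_singleton G w, by rw [my_n1_n2, Set.ncard_singleton]⟩
    · exact Or.inr (hsp S h2)
  have hsplitE : edgesIn G Set.univ = edgesIn G A + edgesIn G Aᶜ :=
    my_edges_split G A hclosed
  have hmE : edgesIn G Set.univ = G.edgeSet.ncard := by
    rw [edgesIn]
    congr 1
    ext e; simp
  have hn1 : n1 t1 Set.univ = n1 t1 A + n1 t1 Aᶜ := my_sep_split t1 A
  have hn2 : n2 t1 Set.univ = n2 t1 A + n2 t1 Aᶜ := my_sep_split (fun v => ¬ t1 v) A
  rcases hcase A ⟨u, huA⟩ with ⟨hA0, hA1⟩ | hAle <;>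
    rcases hcase Aᶜ ⟨v, hvB⟩ with ⟨hB0, hB1⟩ | hBle <;>
    · rw [hn1, hn2] at heq
      rw [hn1] at h6
      rw [hmE] at hsplitE
      omega
end

section
/- Let A and B be rigid blocks of a sparse graph G whose intersection has at least 2 vertices. Then both A ∪ B and A ∩ B are rigid blocks of G. -/
open SimpleGraph

variable {V : Type*}

/-! ### Auxiliary lemmas -/

/-- The integer count function `f(S) = n₁ + 2 n₂ + min 0 (n₁ - 3)`. -/
noncomputable def fZ (t1 : V → Prop) (S : Set V) : ℤ :=
  (n1 t1 S : ℤ) + 2 * n2 t1 S + min 0 ((n1 t1 S : ℤ) - 3)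

lemma n1_image (t1 : V → Prop) (S : Set V) (T : Set ↥S) :
    n1 (fun v : ↥S => t1 ↑v) T = n1 t1 (Subtype.val '' T) := by
  unfold n1
  rw [← Set.ncard_image_of_injective {v ∈ T | t1 ↑v} Subtype.val_injective]
  congr 1; ext v
  constructor
  · rintro ⟨u, ⟨hu, ht⟩, rfl⟩; exact ⟨⟨u, hu, rfl⟩, ht⟩
  · rintro ⟨⟨u, hu, rfl⟩, ht⟩; exact ⟨u, ⟨hu, ht⟩, rfl⟩

lemma n2_image (t1 : V → Prop) (S : Set V) (T : Set ↥S) :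
    n2 (fun v : ↥S => t1 ↑v) T = n2 t1 (Subtype.val '' T) := by
  unfold n2
  rw [← Set.ncard_image_of_injective {v ∈ T | ¬ t1 ↑v} Subtype.val_injective]
  congr 1; ext v
  constructor
  · rintro ⟨u, ⟨hu, ht⟩, rfl⟩; exact ⟨⟨u, hu, rfl⟩, ht⟩
  · rintro ⟨⟨u, hu, rfl⟩, ht⟩; exact ⟨u, ⟨hu, ht⟩, rfl⟩

lemma n1_univ (t1 : V → Prop) (S : Set V) :
    n1 (fun v : ↥S => t1 ↑v) Set.univ = n1 t1 S := by
  rw [n1_image]; congr 1; simp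

lemma n2_univ (t1 : V → Prop) (S : Set V) :
    n2 (fun v : ↥S => t1 ↑v) Set.univ = n2 t1 S := by
  rw [n2_image]; congr 1; simp

/-- Edges of a subgraph of an induced graph, pushed to `Sym2 V`. -/
lemma edges_push {G : SimpleGraph V} {S : Set V} {H : SimpleGraph ↥S}
    (hle : H ≤ G.induce S) :
    (Sym2.map (Subtype.val : ↥S → V) '' H.edgeSet) ⊆
      {e ∈ G.edgeSet | ∀ v ∈ e, v ∈ S} := by
  rintro e ⟨e', he', rfl⟩
  induction e' using Sym2.ind with
  | _ u v =>
    have hadj : (G.induce S).Adj u v := hle he'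
    refine ⟨hadj, ?_⟩
    intro w hw
    rw [Sym2.map_pair_eq, Sym2.mem_iff] at hw
    rcases hw with rfl | rfl
    · exact u.2
    · exact v.2

/-- Pulling back a graph whose edges lie within `S`. -/
lemma edgeSet_comap_image {K : SimpleGraph V} {S : Set V}
    (h : ∀ e ∈ K.edgeSet, ∀ v ∈ e, v ∈ S) :
    Sym2.map (Subtype.val : ↥S → V) '' (K.comap (Subtype.val : ↥S → V)).edgeSet
      = K.edgeSet := by
  ext e
  constructor
  · rintro ⟨e', he', rfl⟩
    induction e' using Sym2.ind with
    | _ u v => exact he'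
  · intro he
    induction e using Sym2.ind with
    | _ a b =>
      have ha : a ∈ S := h _ he a (by simp)
      have hb : b ∈ S := h _ he b (by simp)
      exact ⟨s(⟨a, ha⟩, ⟨b, hb⟩), he, by simp⟩

section fin
variable [Fintype V]

lemma edgesIn_mono_graph {G H : SimpleGraph V} (hle : H ≤ G) (S : Set V) :
    edgesIn H S ≤ edgesIn G S := by
  apply Set.ncard_le_ncard _ (Set.toFinite _)
  rintro e ⟨he, hv⟩
  exact ⟨SimpleGraph.edgeSet_mono hle he, hv⟩

lemma sparse_mono {G H : SimpleGraph V} {t1 : V → Prop} (hle : H ≤ G)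
    (hG : Sparse G t1) : Sparse H t1 := by
  intro S hS
  calc (edgesIn H S : ℤ) ≤ edgesIn G S := by exact_mod_cast edgesIn_mono_graph hle S
    _ ≤ _ := hG S hS

lemma sparse_induce {G : SimpleGraph V} {t1 : V → Prop} (hG : Sparse G t1)
    (S : Set V) : Sparse (G.induce S) (fun v => t1 ↑v) := by
  intro T hT
  have hcard : (Subtype.val '' T).ncard = T.ncard :=
    Set.ncard_image_of_injective T Subtype.val_injective
  have hsub : Sym2.map (Subtype.val : ↥S → V) ''
      {e ∈ (G.induce S).edgeSet | ∀ v ∈ e, v ∈ T} ⊆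
      {e ∈ G.edgeSet | ∀ v ∈ e, v ∈ Subtype.val '' T} := by
    rintro e ⟨e', ⟨he', hv'⟩, rfl⟩
    induction e' using Sym2.ind with
    | _ u v =>
      refine ⟨he', ?_⟩
      intro w hw
      rw [Sym2.map_pair_eq, Sym2.mem_iff] at hw
      rcases hw with rfl | rfl
      · exact ⟨u, hv' u (by simp), rfl⟩
      · exact ⟨v, hv' v (by simp), rfl⟩
  have hle : edgesIn (G.induce S) T ≤ edgesIn G (Subtype.val '' T) := by
    unfold edgesIn
    rw [← Set.ncard_image_of_injective {e ∈ (G.induce S).edgeSet | ∀ v ∈ e, v ∈ T}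
      (Sym2.map.injective Subtype.val_injective)]
    exact Set.ncard_le_ncard hsub (Set.toFinite _)
  calc (edgesIn (G.induce S) T : ℤ) ≤ edgesIn G (Subtype.val '' T) := by exact_mod_cast hle
    _ ≤ _ := by
        rw [n1_image, n2_image]
        exact hG _ (by rw [hcard]; exact hT)

lemma n1_modular (t1 : V → Prop) (A B : Set V) :
    n1 t1 (A ∪ B) + n1 t1 (A ∩ B) = n1 t1 A + n1 t1 B := by
  unfold n1
  have h1 : {v ∈ A ∪ B | t1 v} = {v ∈ A | t1 v} ∪ {v ∈ B | t1 v} := by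
    ext v; simp only [Set.mem_setOf_eq, Set.mem_union, Set.mem_inter_iff]; tauto
  have h2 : {v ∈ A ∩ B | t1 v} = {v ∈ A | t1 v} ∩ {v ∈ B | t1 v} := by
    ext v; simp only [Set.mem_setOf_eq, Set.mem_union, Set.mem_inter_iff]; tauto
  rw [h1, h2]
  exact Set.ncard_union_add_ncard_inter _ _ (Set.toFinite _) (Set.toFinite _)

lemma n2_modular (t1 : V → Prop) (A B : Set V) :
    n2 t1 (A ∪ B) + n2 t1 (A ∩ B) = n2 t1 A + n2 t1 B := by
  unfold n2
  have h1 : {v ∈ A ∪ B | ¬ t1 v} = {v ∈ A | ¬ t1 v} ∪ {v ∈ B | ¬ t1 v} := by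
    ext v; simp only [Set.mem_setOf_eq, Set.mem_union, Set.mem_inter_iff]; tauto
  have h2 : {v ∈ A ∩ B | ¬ t1 v} = {v ∈ A | ¬ t1 v} ∩ {v ∈ B | ¬ t1 v} := by
    ext v; simp only [Set.mem_setOf_eq, Set.mem_union, Set.mem_inter_iff]; tauto
  rw [h1, h2]
  exact Set.ncard_union_add_ncard_inter _ _ (Set.toFinite _) (Set.toFinite _)

lemma n1_mono (t1 : V → Prop) {A B : Set V} (h : A ⊆ B) : n1 t1 A ≤ n1 t1 B :=
  Set.ncard_le_ncard (fun v hv => ⟨h hv.1, hv.2⟩) (Set.toFinite _)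

/-- Submodularity of the count function. -/
lemma fZ_submod (t1 : V → Prop) (A B : Set V) :
    fZ t1 (A ∪ B) + fZ t1 (A ∩ B) ≤ fZ t1 A + fZ t1 B := by
  have h1 := n1_modular t1 A B
  have h2 := n2_modular t1 A B
  have h3 : n1 t1 (A ∩ B) ≤ n1 t1 A := n1_mono t1 Set.inter_subset_left
  have h4 : n1 t1 (A ∩ B) ≤ n1 t1 B := n1_mono t1 Set.inter_subset_right
  simp only [fZ]
  omega

/-- From a rigid block on at least two vertices, extract a spanning sparse subgraph
with the exact edge count, realized as a set of edges of `Sym2 V`. -/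
lemma rigid_block_edges {G : SimpleGraph V} {t1 : V → Prop} {S : Set V}
    (hS : RigidBlock G t1 S) (h2 : 2 ≤ S.ncard) :
    ∃ E : Set (Sym2 V), E ⊆ {e ∈ G.edgeSet | ∀ v ∈ e, v ∈ S} ∧
      (E.ncard : ℤ) = fZ t1 S := by
  obtain ⟨H, hle, hmr⟩ := hS
  rcases hmr with h1 | ⟨-, hcount⟩
  · rw [Nat.card_coe_set_eq] at h1
    omega
  · refine ⟨Sym2.map (Subtype.val : ↥S → V) '' H.edgeSet, edges_push hle, ?_⟩
    rw [Set.ncard_image_of_injective _ (Sym2.map.injective Subtype.val_injective)]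
    rw [hcount, n1_univ, n2_univ]
    rfl

/-- Build a rigid block from an edge set within `S` achieving the count. -/
lemma rigid_block_of_edges {G : SimpleGraph V} {t1 : V → Prop} {S : Set V}
    (hG : Sparse G t1) (E : Set (Sym2 V))
    (hE : E ⊆ {e ∈ G.edgeSet | ∀ v ∈ e, v ∈ S})
    (hcount : (E.ncard : ℤ) = fZ t1 S) : RigidBlock G t1 S := by
  classical
  set K : SimpleGraph V := SimpleGraph.fromEdgeSet E with hK
  have hKedge : K.edgeSet = E := by
    rw [hK, SimpleGraph.edgeSet_fromEdgeSet]
    rw [sdiff_eq_self_iff_disjoint]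
    rw [Set.disjoint_left]
    intro e hd heE
    exact (G.not_isDiag_of_mem_edgeSet (hE heE).1) hd
  have hKle : K ≤ G := by
    rw [← SimpleGraph.fromEdgeSet_edgeSet (G := G)]
    exact SimpleGraph.fromEdgeSet_mono (fun e he => (hE he).1)
  have hKin : ∀ e ∈ K.edgeSet, ∀ v ∈ e, v ∈ S := by
    intro e he v hv
    rw [hKedge] at he
    exact (hE he).2 v hv
  refine ⟨K.comap (Subtype.val : ↥S → V), ?_, ?_⟩
  · intro u v huv
    exact hKle huv
  · refine Or.inr ⟨?_, ?_⟩
    · refine sparse_mono ?_ (sparse_induce hG S)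
      intro u v huv
      exact hKle huv
    · have himg := edgeSet_comap_image hKin
      have : (K.comap (Subtype.val : ↥S → V)).edgeSet.ncard = E.ncard := by
        rw [← hKedge, ← himg,
          Set.ncard_image_of_injective _ (Sym2.map.injective Subtype.val_injective)]
      rw [this, n1_univ, n2_univ]
      exact hcount

end fin

/-- If two rigid blocks of a sparse graph share at least two vertices,
then their union and intersection are rigid blocks. -/
theorem stmt2 {V : Type*} [Fintype V] (G : SimpleGraph V) (t1 : V → Prop)
    (hG : Sparse G t1) (A B : Set V)
    (hA : RigidBlock G t1 A) (hB : RigidBlock G t1 B)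
    (h : 2 ≤ (A ∩ B).ncard) :
    RigidBlock G t1 (A ∪ B) ∧ RigidBlock G t1 (A ∩ B) := by
  classical
  have h2A : 2 ≤ A.ncard :=
    le_trans h (Set.ncard_le_ncard Set.inter_subset_left (Set.toFinite _))
  have h2B : 2 ≤ B.ncard :=
    le_trans h (Set.ncard_le_ncard Set.inter_subset_right (Set.toFinite _))
  have h2U : 2 ≤ (A ∪ B).ncard :=
    le_trans h2A (Set.ncard_le_ncard Set.subset_union_left (Set.toFinite _))
  obtain ⟨EA, hEAsub, hEAcount⟩ := rigid_block_edges hA h2A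
  obtain ⟨EB, hEBsub, hEBcount⟩ := rigid_block_edges hB h2B
  -- modularity of edge counts
  have hmod : (EA ∪ EB).ncard + (EA ∩ EB).ncard = EA.ncard + EB.ncard :=
    Set.ncard_union_add_ncard_inter _ _ (Set.toFinite _) (Set.toFinite _)
  -- the union edge set lies within A ∪ B
  have hUsub : EA ∪ EB ⊆ {e ∈ G.edgeSet | ∀ v ∈ e, v ∈ A ∪ B} := by
    rintro e (he | he)
    · exact ⟨(hEAsub he).1, fun v hv => Or.inl ((hEAsub he).2 v hv)⟩
    · exact ⟨(hEBsub he).1, fun v hv => Or.inr ((hEBsub he).2 v hv)⟩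
  -- the intersection edge set lies within A ∩ B
  have hIsub : EA ∩ EB ⊆ {e ∈ G.edgeSet | ∀ v ∈ e, v ∈ A ∩ B} := by
    rintro e ⟨heA, heB⟩
    exact ⟨(hEAsub heA).1, fun v hv => ⟨(hEAsub heA).2 v hv, (hEBsub heB).2 v hv⟩⟩
  -- sparsity upper bounds
  have hUle : ((EA ∪ EB).ncard : ℤ) ≤ fZ t1 (A ∪ B) := by
    have h1 : (EA ∪ EB).ncard ≤ edgesIn G (A ∪ B) :=
      Set.ncard_le_ncard hUsub (Set.toFinite _)
    calc ((EA ∪ EB).ncard : ℤ) ≤ edgesIn G (A ∪ B) := by exact_mod_cast h1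
      _ ≤ _ := hG _ h2U
  have hIle : ((EA ∩ EB).ncard : ℤ) ≤ fZ t1 (A ∩ B) := by
    have h1 : (EA ∩ EB).ncard ≤ edgesIn G (A ∩ B) :=
      Set.ncard_le_ncard hIsub (Set.toFinite _)
    calc ((EA ∩ EB).ncard : ℤ) ≤ edgesIn G (A ∩ B) := by exact_mod_cast h1
      _ ≤ _ := hG _ h
  have hsubmod := fZ_submod t1 A B
  -- squeeze: everything is an equality
  have hUeq : ((EA ∪ EB).ncard : ℤ) = fZ t1 (A ∪ B) := by
    have := hmod
    push_cast at this ⊢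
    linarith [hEAcount, hEBcount]
  have hIeq : ((EA ∩ EB).ncard : ℤ) = fZ t1 (A ∩ B) := by
    have := hmod
    push_cast at this ⊢
    linarith [hEAcount, hEBcount]
  exact ⟨rigid_block_of_edges hG (EA ∪ EB) hUsub hUeq,
    rigid_block_of_edges hG (EA ∩ EB) hIsub hIeq⟩
end

section
/- A sparse graph (with two types of vertices) is 1.5-orientable. -/
open SimpleGraph

variable {V : Type*}

/-- 1.5-orientability: an orientation (choice of a head endpoint for each edge)
such that type-1 vertices have in-degree at most 1 and type-2 vertices have
in-degree at most 2. -/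
def Orientable (G : SimpleGraph V) (t1 : V → Prop) : Prop :=
  ∃ f : G.edgeSet → V, (∀ e : G.edgeSet, f e ∈ (e : Sym2 V)) ∧
    ∀ v : V, (t1 v → {e : G.edgeSet | f e = v}.ncard ≤ 1) ∧
      {e : G.edgeSet | f e = v}.ncard ≤ 2

/-! Give each vertex as many slots as its allowed in-degree (one for type 1, two for type 2) and
match every edge to a slot at one of its endpoints; heading the edge to that endpoint orients it.
By Hall's theorem the matching exists as soon as any `k` edges see at least `k` slots. The slots
at the vertex set `S` they span number `n₁' + 2n₂'`, and sparsity bounds the number of edges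
inside `S` by that, the term `min 0 (n₁' - 3)` being nonpositive. -/

open Finset

section

variable (G : SimpleGraph V)

lemma card_le_edgesIn_biUnion [DecidableEq V] (s : Finset G.edgeSet) :
    #s ≤ edgesIn G ↑(s.biUnion fun e => (e : Sym2 V).toFinset) := by
  set S := s.biUnion fun e => (e : Sym2 V).toFinset
  have hsub : ↑(s.image Subtype.val) ⊆ {e ∈ G.edgeSet | ∀ v ∈ e, v ∈ (S : Set V)} := by
    intro e he
    obtain ⟨e, hes, rfl⟩ := mem_image.1 he
    exact ⟨e.2, fun v hv => mem_biUnion.2 ⟨e, hes, Sym2.mem_toFinset.2 hv⟩⟩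
  have hfin : {e ∈ G.edgeSet | ∀ v ∈ e, v ∈ (S : Set V)}.Finite :=
    S.sym2.finite_toSet.subset fun e he => mem_sym2_iff.2 he.2
  calc #s = #(s.image Subtype.val) := (card_image_of_injective _ Subtype.val_injective).symm
    _ ≤ edgesIn G S := by rw [← Set.ncard_coe_finset]; exact Set.ncard_le_ncard hsub hfin

lemma edgesIn_eq_zero_of_card_le_one {S : Finset V} (hS : #S ≤ 1) : edgesIn G S = 0 := by
  have hempty : {e ∈ G.edgeSet | ∀ v ∈ e, v ∈ (S : Set V)} = ∅ := by
    refine Set.eq_empty_of_forall_notMem fun e ⟨he, hS'⟩ => ?_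
    induction e using Sym2.ind with
    | h a b => exact G.ne_of_adj he (card_le_one.1 hS a (hS' a (Sym2.mem_mk_left a b)) b
        (hS' b (Sym2.mem_mk_right a b)))
  rw [edgesIn, hempty, Set.ncard_empty]

/-- The easy direction of Hakimi's orientation theorem. -/
theorem exists_orientation_of_edgesIn_le (cap : V → ℕ)
    (h : ∀ S : Finset V, edgesIn G S ≤ ∑ v ∈ S, cap v) :
    ∃ f : G.edgeSet → V, (∀ e : G.edgeSet, f e ∈ (e : Sym2 V)) ∧
      ∀ v, {e | f e = v}.ncard ≤ cap v := by
  classical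
  let slots (e : G.edgeSet) : Finset (Σ v, Fin (cap v)) :=
    (e : Sym2 V).toFinset.sigma fun _ => univ
  have hall (s : Finset G.edgeSet) : #s ≤ #(s.biUnion slots) := by
    set S := s.biUnion fun e => (e : Sym2 V).toFinset
    have hS : s.biUnion slots = S.sigma fun _ => univ := by
      ext ⟨v, i⟩
      simp [slots, S]
    calc #s ≤ edgesIn G S := card_le_edgesIn_biUnion G s
      _ ≤ ∑ v ∈ S, cap v := h S
      _ = #(s.biUnion slots) := by simp [hS]
  obtain ⟨g, hg_inj, hg_mem⟩ := (all_card_le_biUnion_card_iff_exists_injective slots).1 hall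
  refine ⟨fun e => (g e).1, fun e => by simpa [slots] using hg_mem e, fun v => ?_⟩
  have hmaps : Set.MapsTo g {e | (g e).1 = v}
      (Set.range (Sigma.mk (β := fun v => Fin (cap v)) v)) := by
    rintro e rfl
    exact ⟨(g e).2, rfl⟩
  calc {e | (g e).1 = v}.ncard ≤ (Set.range (Sigma.mk (β := fun v => Fin (cap v)) v)).ncard :=
        Set.ncard_le_ncard_of_injOn g (fun e he => hmaps he) hg_inj.injOn (Set.finite_range _)
    _ = cap v := by rw [Set.ncard_range_of_injective sigma_mk_injective]; simp

variable {G} {t1 : V → Prop}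

lemma Sparse.edgesIn_le (hG : Sparse G t1) (S : Finset V) :
    edgesIn G S ≤ n1 t1 S + 2 * n2 t1 S := by
  by_cases hS : 2 ≤ #S
  · have h := hG S (by rwa [Set.ncard_coe_finset])
    have : min 0 ((n1 t1 S : ℤ) - 3) ≤ 0 := min_le_left _ _
    omega
  · rw [edgesIn_eq_zero_of_card_le_one G (by omega)]
    exact Nat.zero_le _

lemma sum_ite_one_two_eq_n1_add_two_mul_n2 [DecidablePred t1] (S : Finset V) :
    ∑ v ∈ S, (if t1 v then 1 else 2) = n1 t1 S + 2 * n2 t1 S := by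
  have hcard (p : V → Prop) [DecidablePred p] :
      {v ∈ (S : Set V) | p v}.ncard = #{v ∈ S | p v} := by
    rw [← Set.ncard_coe_finset, coe_filter]
    rfl
  rw [n1, n2, hcard, hcard, sum_ite]
  simp [mul_comm]

end

theorem stmt4_general {V : Type*} (G : SimpleGraph V) (t1 : V → Prop)
    (hG : Sparse G t1) : Orientable G t1 := by
  classical
  obtain ⟨f, hf_mem, hf_deg⟩ :=
    exists_orientation_of_edgesIn_le G (fun v => if t1 v then 1 else 2) fun S =>
      sum_ite_one_two_eq_n1_add_two_mul_n2 (t1 := t1) S ▸ hG.edgesIn_le S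
  refine ⟨f, hf_mem, fun v => ⟨fun hv => ?_, (hf_deg v).trans ?_⟩⟩
  · simpa [hv] using hf_deg v
  · split_ifs <;> omega

/-- A sparse graph is 1.5-orientable. -/
theorem stmt4 {V : Type*} [Fintype V] (G : SimpleGraph V) (t1 : V → Prop)
    (hG : Sparse G t1) : Orientable G t1 :=
  stmt4_general G t1 hG
end

section
/- Let G be a minimally rigid graph with n₁(G) < 3 and let v be a type 2 vertex of G. Then the graph obtained from G by changing v to type 1 is minimally rigid. -/
open SimpleGraph

variable {V : Type*}

lemma n1_change {V : Type*} [Fintype V] (t1 : V → Prop) (v : V) (hv : ¬ t1 v)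
    (S : Set V) (hvS : v ∈ S) :
    (n1 (fun w => t1 w ∨ w = v) S : ℤ) = (n1 t1 S : ℤ) + 1 := by
  have hset : {w ∈ S | t1 w ∨ w = v} = insert v {w ∈ S | t1 w} := by
    ext w
    simp only [Set.mem_setOf_eq, Set.mem_insert_iff]
    constructor
    · rintro ⟨hwS, hw | rfl⟩
      · exact Or.inr ⟨hwS, hw⟩
      · exact Or.inl rfl
    · rintro (rfl | ⟨hwS, hw⟩)
      · exact ⟨hvS, Or.inr rfl⟩
      · exact ⟨hwS, Or.inl hw⟩
  have hvn : v ∉ {w ∈ S | t1 w} := by simp [hv]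
  simp only [n1, hset]
  rw [Set.ncard_insert_of_notMem hvn (Set.toFinite _)]
  push_cast; ring

lemma n2_change {V : Type*} [Fintype V] (t1 : V → Prop) (v : V) (hv : ¬ t1 v)
    (S : Set V) (hvS : v ∈ S) :
    (n2 (fun w => t1 w ∨ w = v) S : ℤ) = (n2 t1 S : ℤ) - 1 := by
  have hset : {w ∈ S | ¬ t1 w} = insert v {w ∈ S | ¬ (t1 w ∨ w = v)} := by
    ext w
    simp only [Set.mem_setOf_eq, Set.mem_insert_iff]
    constructor
    · rintro ⟨hwS, hw⟩
      by_cases hwv : w = v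
      · exact Or.inl hwv
      · exact Or.inr ⟨hwS, by tauto⟩
    · rintro (rfl | ⟨hwS, hw⟩)
      · exact ⟨hvS, hv⟩
      · exact ⟨hwS, fun hw' => hw (Or.inl hw')⟩
  have hvn : v ∉ {w ∈ S | ¬ (t1 w ∨ w = v)} := by simp
  simp only [n2] at *
  rw [hset, Set.ncard_insert_of_notMem hvn (Set.toFinite _)]
  push_cast; ring

lemma n1_mono_s6 {V : Type*} [Fintype V] (t1 : V → Prop) (S : Set V) :
    n1 t1 S ≤ n1 t1 Set.univ := by
  apply Set.ncard_le_ncard _ (Set.toFinite _)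
  intro w hw
  exact ⟨Set.mem_univ w, hw.2⟩

/-- If `G` is minimally rigid with fewer than 3 type-1 vertices and `v` is a
type-2 vertex, changing `v` to type 1 keeps the graph minimally rigid. -/
theorem stmt6 {V : Type*} [Fintype V] (G : SimpleGraph V) (t1 : V → Prop)
    (v : V) (hv : ¬ t1 v) (h : MinRigid G t1) (h3 : n1 t1 Set.univ < 3) :
    MinRigid G (fun w => t1 w ∨ w = v) := by
  rcases h with h1 | ⟨hsp, heq⟩
  · exact Or.inl h1
  refine Or.inr ⟨?_, ?_⟩
  · intro S hS
    have hb := hsp S hS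
    by_cases hvS : v ∈ S
    · have e1 := n1_change t1 v hv S hvS
      have e2 := n2_change t1 v hv S hvS
      have hle : n1 t1 S ≤ n1 t1 Set.univ := n1_mono_s6 t1 S
      rw [e1, e2]
      omega
    · have e1 : n1 (fun w => t1 w ∨ w = v) S = n1 t1 S := by
        unfold n1
        congr 1
        ext w
        simp only [Set.mem_setOf_eq]
        constructor
        · rintro ⟨hwS, hw | rfl⟩
          · exact ⟨hwS, hw⟩
          · exact absurd hwS hvS
        · rintro ⟨hwS, hw⟩; exact ⟨hwS, Or.inl hw⟩
      have e2 : n2 (fun w => t1 w ∨ w = v) S = n2 t1 S := by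
        unfold n2
        congr 1
        ext w
        simp only [Set.mem_setOf_eq]
        constructor
        · rintro ⟨hwS, hw⟩; exact ⟨hwS, fun h' => hw (Or.inl h')⟩
        · rintro ⟨hwS, hw⟩
          refine ⟨hwS, ?_⟩
          rintro (h' | rfl)
          · exact hw h'
          · exact hvS hwS
      rw [e1, e2]; exact hb
  · have e1 := n1_change t1 v hv Set.univ (Set.mem_univ v)
    have e2 := n2_change t1 v hv Set.univ (Set.mem_univ v)
    rw [e1, e2, heq]
    omega
end

section
/- For every n₁ ≥ 0 and n₂ ≥ 0 with n₁ + n₂ ≥ 2, there exists a minimally rigid graph on n₁ vertices of type 1 and n₂ vertices of type 2. -/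
open SimpleGraph

variable {V : Type*}

/-! Let vertex `0` be joined to every vertex and vertex `1` to a set `R` of further vertices.
Removing `0` and then `1` from a vertex set `S` leaves no edges, so `S` spans
`[0 ∈ S] (|S| - 1) + [1 ∈ S] |S ∩ R|` edges. For a suitable `R` this count is
`n₁ + 2 n₂ + min 0 (n₁ - 3)` on the whole vertex set, and sparsity is linear arithmetic once
one knows that `S ∩ R` avoids `0, 1` and contains at most one type-1 vertex. -/

open Finset

section EdgeCounting

variable (G : SimpleGraph V)

lemma edgesIn_univ : edgesIn G Set.univ = G.edgeSet.ncard := by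
  simp [edgesIn]

lemma edgesIn_coe_finset [DecidableRel G.Adj] (S : Finset V) :
    edgesIn G ↑S = #{e ∈ S.sym2 | e ∈ G.edgeSet} := by
  rw [edgesIn, ← Set.ncard_coe_finset]
  congr 1
  ext e
  simp [and_comm]

lemma edgesIn_insert [DecidableEq V] [DecidableRel G.Adj] {a : V} {S : Finset V} (ha : a ∉ S) :
    edgesIn G ↑(insert a S) = edgesIn G ↑S + #{x ∈ S | G.Adj a x} := by
  have hdisj : Disjoint {e ∈ (insert a S).image (fun x => s(a, x)) | e ∈ G.edgeSet}
      {e ∈ S.sym2 | e ∈ G.edgeSet} := by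
    refine disjoint_filter_filter (disjoint_left.mpr ?_)
    simp only [mem_image, mem_sym2_iff]
    rintro _ ⟨x, -, rfl⟩ h
    exact ha (h a (Sym2.mem_mk_left a x))
  have hneigh : {x ∈ insert a S | G.Adj a x} = {x ∈ S | G.Adj a x} := by
    simp [filter_insert]
  rw [edgesIn_coe_finset, edgesIn_coe_finset, sym2_insert, filter_union,
    card_union_of_disjoint hdisj, filter_image, add_comm]
  simp only [SimpleGraph.mem_edgeSet, hneigh]
  rw [card_image_of_injective _ (fun x y h => Sym2.congr_right.mp h)]

lemma edgesIn_eq_edgesIn_erase_add [DecidableEq V] [DecidableRel G.Adj] (S : Finset V) (a : V) :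
    edgesIn G ↑S = edgesIn G ↑(S.erase a) + if a ∈ S then #{x ∈ S | G.Adj a x} else 0 := by
  split_ifs with ha
  · conv_lhs => rw [← insert_erase ha]
    rw [edgesIn_insert G (notMem_erase a S)]
    congr 2
    ext x
    simp only [mem_filter, mem_erase, and_congr_left_iff, and_iff_right_iff_imp]
    exact fun hx _ => G.ne_of_adj hx |>.symm
  · rw [erase_eq_of_notMem ha, add_zero]

lemma edgesIn_eq_zero {S : Set V} (h : ∀ x ∈ S, ∀ y ∈ S, ¬ G.Adj x y) : edgesIn G S = 0 := by
  rw [edgesIn, ← Set.ncard_empty (Sym2 V)]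
  congr 1
  refine Set.eq_empty_iff_forall_notMem.mpr ?_
  rintro ⟨x, y⟩ ⟨hxy, hS⟩
  exact h x (hS x (Sym2.mem_mk_left x y)) y (hS y (Sym2.mem_mk_right x y)) hxy

end EdgeCounting

section TypeCounting

variable (t1 : V → Prop) [DecidablePred t1]

lemma n1_coe_finset (S : Finset V) : n1 t1 ↑S = #{v ∈ S | t1 v} := by
  rw [n1, ← Set.ncard_coe_finset]
  congr 1
  ext v
  simp

lemma n2_coe_finset (S : Finset V) : n2 t1 ↑S = #{v ∈ S | ¬ t1 v} := by
  rw [n2, ← Set.ncard_coe_finset]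
  congr 1
  ext v
  simp

lemma n1_add_n2_coe_finset (S : Finset V) : n1 t1 ↑S + n2 t1 ↑S = #S := by
  rw [n1_coe_finset, n2_coe_finset, card_filter_add_card_filter_not]

end TypeCounting

lemma sparse_of_forall_finset [Finite V] {G : SimpleGraph V} {t1 : V → Prop}
    (h : ∀ S : Finset V, 2 ≤ #S →
      (edgesIn G ↑S : ℤ) ≤ (n1 t1 ↑S : ℤ) + 2 * n2 t1 ↑S + min 0 ((n1 t1 ↑S : ℤ) - 3)) :
    Sparse G t1 := by
  intro S hS
  lift S to Finset V using S.toFinite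
  exact h S (by rwa [Set.ncard_coe_finset] at hS)

section TwoHubGraph

variable [DecidableEq V] (a b : V) (R : Finset V)

def twoHubGraph : SimpleGraph V := SimpleGraph.fromRel fun u v => u = a ∨ (u = b ∧ v ∈ R)

variable {a b R}

lemma twoHubGraph_adj {u v : V} : (twoHubGraph a b R).Adj u v ↔
    u ≠ v ∧ (u = a ∨ v = a ∨ (u = b ∧ v ∈ R) ∨ (v = b ∧ u ∈ R)) := by
  simp only [twoHubGraph, SimpleGraph.fromRel_adj]
  tauto

instance : DecidableRel (twoHubGraph a b R).Adj := fun _ _ =>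
  decidable_of_iff' _ twoHubGraph_adj

lemma edgesIn_twoHubGraph (hab : a ≠ b) (haR : a ∉ R) (hbR : b ∉ R) (S : Finset V) :
    edgesIn (twoHubGraph a b R) ↑S =
      (if a ∈ S then #S - 1 else 0) + if b ∈ S then #(S ∩ R) else 0 := by
  have hrest : edgesIn (twoHubGraph a b R) ↑((S.erase a).erase b) = 0 := by
    refine edgesIn_eq_zero _ fun x hx y hy hxy => ?_
    simp only [coe_erase, Set.mem_sdiff, Set.mem_singleton_iff] at hx hy
    rw [twoHubGraph_adj] at hxy
    tauto
  have hnbr_a : {x ∈ S | (twoHubGraph a b R).Adj a x} = S.erase a := by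
    ext x
    simp only [mem_filter, mem_erase, twoHubGraph_adj]
    tauto
  have hnbr_b : {x ∈ S.erase a | (twoHubGraph a b R).Adj b x} = S ∩ R := by
    ext x
    simp only [mem_filter, mem_erase, mem_inter, twoHubGraph_adj]
    constructor
    · rintro ⟨⟨hxa, hxS⟩, hbx, h⟩
      refine ⟨hxS, ?_⟩
      rcases h with rfl | rfl | ⟨-, hx⟩ | ⟨rfl, -⟩ <;> tauto
    · rintro ⟨hxS, hxR⟩
      exact ⟨⟨fun h => haR (h ▸ hxR), hxS⟩, fun h => hbR (h ▸ hxR), by tauto⟩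
  rw [edgesIn_eq_edgesIn_erase_add _ S a, edgesIn_eq_edgesIn_erase_add _ (S.erase a) b, hrest,
    hnbr_a, hnbr_b, card_erase_eq_ite]
  simp only [mem_erase, ne_eq, hab.symm, not_false_eq_true, true_and, zero_add]
  split_ifs <;> omega

end TwoHubGraph

section MinRigidGraph

variable (n₁ n₂ : ℕ) (h : 2 ≤ n₁ + n₂)

/-- The type-2 vertices and the last type-1 vertex `n₁ - 1` (every `v ≥ 2` when `n₁ ≤ 2`).
Joining `0` to all vertices and `1` to these, the type-1 vertices span the triangle
`0, 1, n₁ - 1` with pendant edges at `0`. -/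
def secondHubNeighbors : Finset (Fin (n₁ + n₂)) := {v | 2 ≤ (v : ℕ) ∧ n₁ ≤ v + 1}

def minRigidGraph : SimpleGraph (Fin (n₁ + n₂)) :=
  twoHubGraph ⟨0, by omega⟩ ⟨1, by omega⟩ (secondHubNeighbors n₁ n₂)

lemma edgesIn_minRigidGraph (S : Finset (Fin (n₁ + n₂))) :
    edgesIn (minRigidGraph n₁ n₂ h) ↑S =
      (if ⟨0, by omega⟩ ∈ S then #S - 1 else 0) +
        if ⟨1, by omega⟩ ∈ S then #(S ∩ secondHubNeighbors n₁ n₂) else 0 :=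
  edgesIn_twoHubGraph (by simp [Fin.ext_iff]) (by simp [secondHubNeighbors])
    (by simp [secondHubNeighbors]) S

lemma card_inter_secondHubNeighbors_le_card_erase (S : Finset (Fin (n₁ + n₂))) :
    #(S ∩ secondHubNeighbors n₁ n₂) ≤ #((S.erase ⟨0, by omega⟩).erase ⟨1, by omega⟩) := by
  refine card_le_card fun v hv => ?_
  simp only [secondHubNeighbors, mem_inter, mem_filter, mem_univ, true_and] at hv
  simp only [mem_erase, ne_eq, Fin.ext_iff]
  exact ⟨by omega, by omega, hv.1⟩

lemma card_inter_secondHubNeighbors_le_n2_add_one (S : Finset (Fin (n₁ + n₂))) :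
    #(S ∩ secondHubNeighbors n₁ n₂) ≤ n2 (fun v : Fin (n₁ + n₂) => (v : ℕ) < n₁) ↑S + 1 := by
  have htype1 : #{v ∈ S ∩ secondHubNeighbors n₁ n₂ | v.val < n₁} ≤ 1 := by
    refine card_le_one.mpr fun v hv w hw => Fin.ext ?_
    simp only [secondHubNeighbors, mem_filter, mem_inter, mem_univ, true_and] at hv hw
    omega
  have htype2 : #{v ∈ S ∩ secondHubNeighbors n₁ n₂ | ¬ v.val < n₁} ≤
      #{v ∈ S | ¬ v.val < n₁} :=
    card_le_card (filter_subset_filter _ inter_subset_left)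
  rw [n2_coe_finset, ← card_filter_add_card_filter_not (fun v : Fin (n₁ + n₂) => (v : ℕ) < n₁)]
  omega

lemma sparse_minRigidGraph :
    Sparse (minRigidGraph n₁ n₂ h) (fun v : Fin (n₁ + n₂) => (v : ℕ) < n₁) := by
  refine sparse_of_forall_finset fun S hS => ?_
  have hcard := n1_add_n2_coe_finset (fun v : Fin (n₁ + n₂) => (v : ℕ) < n₁) S
  have hhubs := card_inter_secondHubNeighbors_le_card_erase n₁ n₂ h S
  have htype2 := card_inter_secondHubNeighbors_le_n2_add_one n₁ n₂ S
  simp only [card_erase_eq_ite, mem_erase, ne_eq, Fin.mk.injEq, one_ne_zero, not_false_eq_true,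
    true_and] at hhubs
  rw [edgesIn_minRigidGraph n₁ n₂ h]
  split_ifs at hhubs ⊢ <;> omega

lemma card_secondHubNeighbors :
    #(secondHubNeighbors n₁ n₂) + min (n₁ + n₂) (max 2 (n₁ - 1)) = n₁ + n₂ := by
  have hsplit := card_filter_add_card_filter_not (s := (univ : Finset (Fin (n₁ + n₂))))
    (fun v => v.val < max 2 (n₁ - 1))
  have hR : secondHubNeighbors n₁ n₂ =
      ({v | ¬ v.val < max 2 (n₁ - 1)} : Finset (Fin (n₁ + n₂))) :=
    filter_congr fun v _ => by omega
  rw [card_univ, Fintype.card_fin, Fin.card_filter_val_lt] at hsplit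
  rw [hR]
  omega

lemma n1_univ_fin_add : n1 (fun v : Fin (n₁ + n₂) => (v : ℕ) < n₁) Set.univ = n₁ := by
  rw [← coe_univ, n1_coe_finset, Fin.card_filter_val_lt]
  omega

lemma n2_univ_fin_add : n2 (fun v : Fin (n₁ + n₂) => (v : ℕ) < n₁) Set.univ = n₂ := by
  have := n1_add_n2_coe_finset (fun v : Fin (n₁ + n₂) => (v : ℕ) < n₁) univ
  rw [coe_univ, n1_univ_fin_add, card_univ, Fintype.card_fin] at this
  omega

lemma ncard_edgeSet_minRigidGraph :
    ((minRigidGraph n₁ n₂ h).edgeSet.ncard : ℤ) = n₁ + 2 * n₂ + min 0 ((n₁ : ℤ) - 3) := by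
  have hR := card_secondHubNeighbors n₁ n₂
  rw [← edgesIn_univ, ← coe_univ, edgesIn_minRigidGraph, univ_inter, card_univ, Fintype.card_fin]
  simp only [mem_univ, if_true]
  omega

end MinRigidGraph

/-- For all `n₁, n₂` with `n₁ + n₂ ≥ 2` there is a minimally rigid graph on
`n₁` type-1 vertices and `n₂` type-2 vertices. -/
theorem stmt9 (n₁ n₂ : ℕ) (h : 2 ≤ n₁ + n₂) :
    ∃ G : SimpleGraph (Fin (n₁ + n₂)), MinRigid G (fun v => (v : ℕ) < n₁) := by
  refine ⟨minRigidGraph n₁ n₂ h, Or.inr ⟨sparse_minRigidGraph n₁ n₂ h, ?_⟩⟩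
  rw [n1_univ_fin_add, n2_univ_fin_add]
  exact ncard_edgeSet_minRigidGraph n₁ n₂ h
end

section
/- If q ≤ 1/2 and c(1−q) ≤ 1, then Δ(x) = x − (1−q)(1 − e^{−cx}) − q(1 − e^{−cx} − cx·e^{−cx}) ≥ 0 for all x ∈ [0,1]. -/
/-!
Write `t = c x`. Expanding, `Δ(x) = x - 1 + (1 + q t) e^{-t}`, and `c (1 - q) ≤ 1` gives `x ≥ (1 - q) t`.
The resulting lower bound `(1 - q) t - 1 + (1 + q t) e^{-t}` decreases in `q` (its `q`-coefficient is
`-t (1 - e^{-t}) ≤ 0`), so it suffices to treat `q = 1/2`, i.e. `(2 + t) e^{-t} ≥ 2 - t` for `t ≥ 0`.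
That follows by monotonicity: the derivative of `(2 + t) e^{-t} + t` is `1 - (1 + t) e^{-t} ≥ 0`.
-/

open Real Set

lemma two_sub_le_two_add_mul_exp_neg {t : ℝ} (ht : 0 ≤ t) : 2 - t ≤ (2 + t) * exp (-t) := by
  let φ : ℝ → ℝ := fun s ↦ (2 + s) * exp (-s) + s
  have hφ : ∀ s, HasDerivAt φ (1 - (1 + s) * exp (-s)) s := fun s ↦ by
    have := (((hasDerivAt_id s).const_add 2).mul (hasDerivAt_neg s).exp).add (hasDerivAt_id s)
    exact this.congr_deriv (by simp only [id]; ring)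
  have hφ' : ∀ s, 0 ≤ 1 - (1 + s) * exp (-s) := fun s ↦ by
    have : (1 + s) * exp (-s) ≤ exp s * exp (-s) :=
      mul_le_mul_of_nonneg_right (by linarith [add_one_le_exp s]) (exp_nonneg _)
    rw [← exp_add, add_neg_cancel, exp_zero] at this
    linarith
  have hmono : MonotoneOn φ (Ici 0) :=
    monotoneOn_of_hasDerivWithinAt_nonneg (convex_Ici 0)
      (fun s _ ↦ (hφ s).continuousAt.continuousWithinAt)
      (fun s _ ↦ (hφ s).hasDerivWithinAt) (fun s _ ↦ hφ' s)
  have := hmono self_mem_Ici ht ht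
  simp only [φ, add_zero, neg_zero, exp_zero, mul_one] at this
  linarith

lemma sub_one_add_one_add_mul_mul_exp_neg_nonneg {t q : ℝ} (ht : 0 ≤ t) (hq : q ≤ 1 / 2) :
    0 ≤ (1 - q) * t - 1 + (1 + q * t) * exp (-t) := by
  have hq_coeff : 0 ≤ (1 / 2 - q) * (t * (1 - exp (-t))) :=
    mul_nonneg (by linarith) (mul_nonneg ht (by simpa using exp_le_one_iff.2 (neg_nonpos.2 ht)))
  linarith [two_sub_le_two_add_mul_exp_neg ht]

theorem stmt15_general (c q : ℝ) (hc : 0 < c) (hq : q ≤ 1 / 2)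
    (hcq : c * (1 - q) ≤ 1) (x : ℝ) (hx0 : 0 ≤ x) :
    0 ≤ x - (1 - q) * (1 - Real.exp (-(c * x))) -
      q * (1 - Real.exp (-(c * x)) - c * x * Real.exp (-(c * x))) := by
  have hx : (1 - q) * (c * x) ≤ x := by nlinarith
  have := sub_one_add_one_add_mul_mul_exp_neg_nonneg (mul_nonneg hc.le hx0) hq
  linarith

/-- If `q ≤ 1/2` and `c(1-q) ≤ 1` then
`Δ(x) = x - (1-q)(1-e^{-cx}) - q(1-e^{-cx}-cx e^{-cx}) ≥ 0` on `[0,1]`. -/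
theorem stmt15 (c q : ℝ) (hc : 0 < c) (hq0 : 0 ≤ q) (hq : q ≤ 1 / 2)
    (hcq : c * (1 - q) ≤ 1) (x : ℝ) (hx0 : 0 ≤ x) (hx1 : x ≤ 1) :
    0 ≤ x - (1 - q) * (1 - Real.exp (-(c * x))) -
      q * (1 - Real.exp (-(c * x)) - c * x * Real.exp (-(c * x))) :=
  stmt15_general c q hc hq hcq x hx0
end

section
/- There exists a constant C > 0 such that for all α ∈ (0,1], all r ∈ ℕ, and all s₁,…,s_r ∈ ℕ with Σᵢ sᵢ = αs and Σᵢ i·sᵢ = s (where s, αs ∈ ℕ), we have ∏_{i=1}^r sᵢ^{−sᵢ} ≤ C^{αs} / (α²s)^{αs}. -/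
/-!
Put `β = t / s` and compare `f` with the geometric weights `qᵢ = β (1 - β)^(i-1)`, whose total
mass is at most `1`. Gibbs' inequality, in the form `∏ (t qᵢ)^fᵢ ≤ ∏ fᵢ^fᵢ` when `∑ fᵢ = t`,
gives `∏ fᵢ^fᵢ ≥ (t β)^t (1 - β)^(s-t)` because `∑ (i - 1) fᵢ = s - t`. Since
`(1 - t / s)^(s-t) ≥ e^(-t)` and `t β = α² s`, the constant `C = e` works.
-/

open Finset Real

theorem pow_le_pow_self_mul_exp_sub (n : ℕ) {y : ℝ} (hy : 0 ≤ y) :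
    y ^ n ≤ (n : ℝ) ^ n * exp (y - n) := by
  rcases n.eq_zero_or_pos with rfl | hn
  · simpa using one_le_exp hy
  have hn' : (0 : ℝ) < n := by exact_mod_cast hn
  set u := y / n with hu_def
  have hu : u ≤ exp (u - 1) := by linarith [add_one_le_exp (u - 1)]
  calc y ^ n = (n : ℝ) ^ n * u ^ n := by rw [← mul_pow, mul_div_cancel₀ _ hn'.ne']
    _ ≤ (n : ℝ) ^ n * exp (u - 1) ^ n := by gcongr
    _ = (n : ℝ) ^ n * exp (y - n) := by
      rw [← exp_nat_mul, hu_def]; congr 2; field_simp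

theorem prod_mul_pow_le_prod_pow_self {ι : Type*} (S : Finset ι) (f : ι → ℕ) (q : ι → ℝ)
    (hq : ∀ i ∈ S, 0 ≤ q i) (hq1 : ∑ i ∈ S, q i ≤ 1) :
    ∏ i ∈ S, ((∑ j ∈ S, f j : ℕ) * q i) ^ f i ≤ ∏ i ∈ S, (f i : ℝ) ^ f i := by
  set t : ℝ := ((∑ j ∈ S, f j : ℕ) : ℝ)
  have ht : 0 ≤ t := Nat.cast_nonneg _
  calc ∏ i ∈ S, (t * q i) ^ f i ≤ ∏ i ∈ S, ((f i : ℝ) ^ f i * exp (t * q i - f i)) :=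
        prod_le_prod (fun i hi => pow_nonneg (mul_nonneg ht (hq i hi)) _)
          fun i hi => pow_le_pow_self_mul_exp_sub _ (mul_nonneg ht (hq i hi))
    _ = (∏ i ∈ S, (f i : ℝ) ^ f i) * exp (t * ((∑ i ∈ S, q i) - 1)) := by
        rw [prod_mul_distrib, ← exp_sum, sum_sub_distrib, ← mul_sum]
        simp [t, mul_sub]
    _ ≤ ∏ i ∈ S, (f i : ℝ) ^ f i := by
        apply mul_le_of_le_one_right (by positivity)
        exact exp_le_one_iff.mpr (mul_nonpos_of_nonneg_of_nonpos ht (by linarith))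

theorem sum_Icc_mul_one_sub_pow {R : Type*} [CommRing R] (a : R) (r : ℕ) :
    ∑ i ∈ Icc 1 r, a * (1 - a) ^ (i - 1) = 1 - (1 - a) ^ r := by
  induction r with
  | zero => simp
  | succ r ih => rw [sum_Icc_succ_top (by omega), ih, Nat.add_sub_cancel]; ring

theorem exp_neg_le_one_sub_div_add_pow (n : ℕ) {x : ℝ} (hx : 0 ≤ x) :
    exp (-x) ≤ (1 - x / (n + x)) ^ n := by
  rcases n.eq_zero_or_pos with rfl | hn
  · simpa using hx
  have hn' : (0 : ℝ) < n := by exact_mod_cast hn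
  have h := one_sub_div_pow_le_exp_neg (n := n) (t := -x) (by linarith)
  rw [neg_neg, neg_div, sub_neg_eq_add] at h
  calc exp (-x) = (exp x)⁻¹ := exp_neg x
    _ ≤ ((1 + x / n) ^ n)⁻¹ := inv_anti₀ (by positivity) h
    _ = (1 - x / (n + x)) ^ n := by rw [← inv_pow]; congr 1; field_simp; ring

theorem sum_Icc_pred_mul_add_sum (r : ℕ) (f : ℕ → ℕ) :
    ∑ i ∈ Icc 1 r, (i - 1) * f i + ∑ i ∈ Icc 1 r, f i = ∑ i ∈ Icc 1 r, i * f i := by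
  rw [← sum_add_distrib]
  refine sum_congr rfl fun i hi => ?_
  obtain ⟨k, rfl⟩ := Nat.exists_eq_add_of_le (mem_Icc.mp hi).1
  simp only [Nat.add_sub_cancel_left]; ring

theorem pow_mul_exp_neg_le_prod_pow_self (r s t : ℕ) (f : ℕ → ℕ)
    (h1 : ∑ i ∈ Icc 1 r, f i = t) (h2 : ∑ i ∈ Icc 1 r, i * f i = s) :
    ((t : ℝ) ^ 2 / s) ^ t * exp (-t) ≤ ∏ i ∈ Icc 1 r, (f i : ℝ) ^ f i := by
  obtain ⟨d, hd⟩ : ∃ d, ∑ i ∈ Icc 1 r, (i - 1) * f i = d := ⟨_, rfl⟩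
  obtain rfl : d + t = s := by rw [← hd, ← h1, ← h2, sum_Icc_pred_mul_add_sum]
  set β : ℝ := t / (d + t)
  have hβ : 0 ≤ β := by positivity
  have hβ1 : β ≤ 1 := div_le_one_of_le₀ (le_add_of_nonneg_left d.cast_nonneg) (by positivity)
  set q : ℕ → ℝ := fun i => β * (1 - β) ^ (i - 1)
  have hq : ∀ i ∈ Icc 1 r, 0 ≤ q i := fun i _ => mul_nonneg hβ (pow_nonneg (by linarith) _)
  have hq1 : ∑ i ∈ Icc 1 r, q i ≤ 1 := by
    rw [sum_Icc_mul_one_sub_pow]; linarith [pow_nonneg (sub_nonneg.mpr hβ1) r]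
  have hgibbs := prod_mul_pow_le_prod_pow_self _ f q hq hq1
  rw [h1] at hgibbs
  have hprod : ∏ i ∈ Icc 1 r, ((t : ℝ) * q i) ^ f i = (t * β) ^ t * (1 - β) ^ d := by
    simp_rw [q, ← mul_assoc, mul_pow, ← pow_mul, prod_mul_distrib, prod_pow_eq_pow_sum, h1, hd]
  calc ((t : ℝ) ^ 2 / ((d + t : ℕ) : ℝ)) ^ t * exp (-t) = (t * β) ^ t * exp (-t) := by
        push_cast; ring
    _ ≤ (t * β) ^ t * (1 - β) ^ d := by
        gcongr; exact exp_neg_le_one_sub_div_add_pow d t.cast_nonneg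
    _ ≤ ∏ i ∈ Icc 1 r, (f i : ℝ) ^ f i := hprod ▸ hgibbs

/-- There is an absolute constant `C > 0` such that for all `α = t/s ∈ (0,1]`
and naturals `s₁,…,s_r` with `∑ sᵢ = αs = t` and `∑ i sᵢ = s`, we have
`∏ sᵢ^{-sᵢ} ≤ C^{αs} / (α² s)^{αs}` (with the convention `0^0 = 1`). -/
theorem stmt18 : ∃ C : ℝ, 0 < C ∧
    ∀ (r s t : ℕ) (f : ℕ → ℕ), 0 < s → 0 < t → t ≤ s →
      (∑ i ∈ Finset.Icc 1 r, f i) = t →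
      (∑ i ∈ Finset.Icc 1 r, i * f i) = s →
      ∏ i ∈ Finset.Icc 1 r, (1 / (f i : ℝ) ^ f i) ≤
        C ^ t / (((t : ℝ) / s) ^ 2 * s) ^ t := by
  refine ⟨exp 1, exp_pos 1, fun r s t f hs ht _ h1 h2 => ?_⟩
  have hs' : (0 : ℝ) < s := by exact_mod_cast hs
  have ht' : (0 : ℝ) < t := by exact_mod_cast ht
  have hkey := pow_mul_exp_neg_le_prod_pow_self r s t f h1 h2
  calc ∏ i ∈ Icc 1 r, (1 / (f i : ℝ) ^ f i) = (∏ i ∈ Icc 1 r, (f i : ℝ) ^ f i)⁻¹ := by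
        simp_rw [one_div, prod_inv_distrib]
    _ ≤ (((t : ℝ) ^ 2 / s) ^ t * exp (-t))⁻¹ := inv_anti₀ (by positivity) hkey
    _ = exp 1 ^ t / (((t : ℝ) / s) ^ 2 * s) ^ t := by
        rw [show ((t : ℝ) / s) ^ 2 * s = t ^ 2 / s by field_simp, ← exp_nat_mul, mul_one,
          exp_neg, mul_inv, inv_inv]
        exact (div_eq_inv_mul _ _).symm
end
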